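/- arXiv:1110.5509 — 3 statements merged into one kernel-verified Lean document; each statement's English description precedes it below -/
import Mathlib

section
/- For r_1,…,r_m > 0 not all equal and weights k_i > 0, the function h(α) = (Σ_{i=1}^m k_i r_i^α log r_i)/(Σ_{i=1}^m k_i r_i^α) − 1/α is strictly increasing on (0,∞). -/
open Finset

lemma chebyshev_aux (m : ℕ) (a b L : Fin m → ℝ)
    (hab : ∀ i j, L i ≤ L j → b i * a j ≤ a i * b j) :
    (∑ i, a i * L i) * (∑ i, b i) ≤ (∑ i, b i * L i) * (∑ i, a i) := by
  have hterm : ∀ i j, 0 ≤ (b i * a j - a i * b j) * (L i - L j) := by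
    intro i j
    rcases le_total (L i) (L j) with h | h
    · exact mul_nonneg_iff.2 (Or.inr ⟨sub_nonpos.2 (hab i j h), sub_nonpos.2 h⟩)
    · have := hab j i h
      apply mul_nonneg (sub_nonneg.2 (by linarith)) (sub_nonneg.2 h)
  have hsum : 0 ≤ ∑ i, ∑ j, (b i * a j - a i * b j) * (L i - L j) :=
    Finset.sum_nonneg fun i _ => Finset.sum_nonneg fun j _ => hterm i j
  have swap : ∑ i, ∑ j, (a i * (b j * L j) - b i * (a j * L j))
      = ∑ i, ∑ j, ((b i * L i) * a j - (a i * L i) * b j) := by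
    rw [Finset.sum_comm]
    apply Finset.sum_congr rfl; intro i _
    apply Finset.sum_congr rfl; intro j _
    ring
  have expand : ∑ i, ∑ j, (b i * a j - a i * b j) * (L i - L j)
      = 2 * (∑ i, ∑ j, ((b i * L i) * a j - (a i * L i) * b j)) := by
    have e1 : ∑ i, ∑ j, (b i * a j - a i * b j) * (L i - L j)
        = ∑ i, ∑ j, (((b i * L i) * a j - (a i * L i) * b j)
            + (a i * (b j * L j) - b i * (a j * L j))) := by
      apply Finset.sum_congr rfl; intro i _
      apply Finset.sum_congr rfl; intro j _
      ring
    rw [e1]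
    simp only [Finset.sum_add_distrib, swap]
    ring
  have key : 0 ≤ ∑ i, ∑ j, ((b i * L i) * a j - (a i * L i) * b j) := by
    rw [expand] at hsum; linarith
  have e2 : ∑ i, ∑ j, ((b i * L i) * a j - (a i * L i) * b j)
      = (∑ i, b i * L i) * (∑ i, a i) - (∑ i, a i * L i) * (∑ i, b i) := by
    simp only [Finset.sum_sub_distrib, ← Finset.mul_sum, ← Finset.sum_mul]
  rw [e2] at key
  linarith

theorem stmt_8 (m : ℕ) (r : Fin m → ℝ) (k : Fin m → ℝ)
    (hr : ∀ i, 0 < r i) (hk : ∀ i, 0 < k i) (hne : ∃ i j, r i ≠ r j) :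
    StrictMonoOn (fun α : ℝ =>
      (∑ i, k i * r i ^ α * Real.log (r i)) / (∑ i, k i * r i ^ α) - 1 / α)
      (Set.Ioi 0) := by
  obtain ⟨i0, -, -⟩ := hne
  haveI : Nonempty (Fin m) := ⟨i0⟩
  intro x hx y hy hxy
  simp only [Set.mem_Ioi] at hx hy
  have Spos : ∀ α : ℝ, 0 < ∑ i, k i * r i ^ α := fun α =>
    Finset.sum_pos (fun i _ => mul_pos (hk i) (Real.rpow_pos_of_pos (hr i) _)) Finset.univ_nonempty
  have gmono : (∑ i, k i * r i ^ x * Real.log (r i)) / (∑ i, k i * r i ^ x)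
      ≤ (∑ i, k i * r i ^ y * Real.log (r i)) / (∑ i, k i * r i ^ y) := by
    rw [div_le_div_iff₀ (Spos x) (Spos y)]
    have := chebyshev_aux m (fun i => k i * r i ^ x) (fun i => k i * r i ^ y)
      (fun i => Real.log (r i)) ?_
    · exact this
    · intro i j hL
      have hij : r i ≤ r j := by
        rwa [Real.log_le_log_iff (hr i) (hr j)] at hL
      have h1 : r i ^ (y - x) ≤ r j ^ (y - x) :=
        Real.rpow_le_rpow (hr i).le hij (by linarith)
      have ei : r i ^ y = r i ^ x * r i ^ (y - x) := by
        rw [← Real.rpow_add (hr i)]; ring_nf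
      have ej : r j ^ y = r j ^ x * r j ^ (y - x) := by
        rw [← Real.rpow_add (hr j)]; ring_nf
      show k i * r i ^ y * (k j * r j ^ x) ≤ k i * r i ^ x * (k j * r j ^ y)
      have pki := (hk i); have pkj := (hk j)
      have pxi : (0:ℝ) < r i ^ x := Real.rpow_pos_of_pos (hr i) x
      have pxj : (0:ℝ) < r j ^ x := Real.rpow_pos_of_pos (hr j) x
      have pzi : (0:ℝ) < r i ^ (y - x) := Real.rpow_pos_of_pos (hr i) _
      rw [ei, ej]
      nlinarith [mul_pos pki pkj, mul_pos pxi pxj,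
        mul_pos (mul_pos pki pkj) (mul_pos pxi pxj)]
  have hinv : 1 / y < 1 / x := one_div_lt_one_div_of_lt hx hxy
  simp only
  linarith
end

section
/- For r_1,…,r_m > 0 not all equal and weights k_i > 0, let h(α) = (Σ k_i r_i^α log r_i)/(Σ k_i r_i^α) − 1/α. Then h(α) → −∞ as α → 0⁺ and h(α) → max_i log r_i as α → ∞; consequently, if (1/m)Σ_{i=1}^m log r_i < max_i log r_i, the equation h(α) = (1/m)Σ log r_i has a unique solution α > 0. -/
open Filter Real Finset

-- key monotonicity lemma (Chebyshev-type)
lemma ws_ratio_mono {m : ℕ} (k L : Fin m → ℝ) (hk : ∀ i, 0 < k i) {a b : ℝ} (hab : a ≤ b) :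
    (∑ i, k i * Real.exp (L i * a) * L i) * (∑ i, k i * Real.exp (L i * b)) ≤
    (∑ i, k i * Real.exp (L i * b) * L i) * (∑ i, k i * Real.exp (L i * a)) := by
  set A : Fin m → ℝ := fun i => k i * Real.exp (L i * a) with hA
  set d : Fin m → ℝ := fun i => Real.exp (L i * (b - a)) with hd
  have hAd : ∀ i, k i * Real.exp (L i * b) = A i * d i := by
    intro i
    simp only [hA, hd, mul_assoc, ← Real.exp_add]
    ring_nf
  have key : 0 ≤ ∑ i, ∑ j, A i * A j * (L i * (d i - d j)) := by
    have hsym : ∑ i, ∑ j, A i * A j * (L i * (d i - d j))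
        = ∑ i, ∑ j, A j * A i * (L j * (d j - d i)) := Finset.sum_comm
    have h2 : 2 * (∑ i, ∑ j, A i * A j * (L i * (d i - d j)))
        = ∑ i, ∑ j, (A i * A j * ((L i - L j) * (d i - d j))) := by
      rw [two_mul]
      nth_rewrite 2 [hsym]
      rw [← Finset.sum_add_distrib]
      congr 1; ext i
      rw [← Finset.sum_add_distrib]
      congr 1; ext j
      ring
    have hterm : ∀ i j : Fin m, 0 ≤ A i * A j * ((L i - L j) * (d i - d j)) := by
      intro i j
      have hApos : ∀ i, 0 < A i := fun i => mul_pos (hk i) (Real.exp_pos _)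
      have hdd : 0 ≤ (L i - L j) * (d i - d j) := by
        rcases le_total (L i) (L j) with hij | hij
        · have : d i ≤ d j := Real.exp_le_exp.2 (mul_le_mul_of_nonneg_right hij (by linarith))
          have := mul_nonneg (sub_nonneg.2 hij) (sub_nonneg.2 this)
          nlinarith
        · have : d j ≤ d i := Real.exp_le_exp.2 (mul_le_mul_of_nonneg_right hij (by linarith))
          exact mul_nonneg (sub_nonneg.2 hij) (sub_nonneg.2 this)
      exact mul_nonneg (mul_nonneg (hApos i).le (hApos j).le) hdd
    have : 0 ≤ ∑ i, ∑ j, (A i * A j * ((L i - L j) * (d i - d j))) :=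
      Finset.sum_nonneg fun i _ => Finset.sum_nonneg fun j _ => hterm i j
    linarith
  have expand : (∑ i, k i * Real.exp (L i * b) * L i) * (∑ i, k i * Real.exp (L i * a))
      - (∑ i, k i * Real.exp (L i * a) * L i) * (∑ i, k i * Real.exp (L i * b))
      = ∑ i, ∑ j, A i * A j * (L i * (d i - d j)) := by
    simp only [hAd]
    rw [Finset.sum_mul_sum, Finset.sum_mul_sum, ← Finset.sum_sub_distrib]
    congr 1; ext i
    rw [← Finset.sum_sub_distrib]
    congr 1; ext j
    ring
  linarith

open Filter Real Finset

theorem stmt_9 (m : ℕ) (hm : 0 < m) (r : Fin m → ℝ) (k : Fin m → ℝ)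
    (hr : ∀ i, 0 < r i) (hk : ∀ i, 0 < k i) (hne : ∃ i j, r i ≠ r j) :
    let h : ℝ → ℝ := fun α =>
      (∑ i, k i * r i ^ α * Real.log (r i)) / (∑ i, k i * r i ^ α) - 1 / α
    Filter.Tendsto h (nhdsWithin 0 (Set.Ioi 0)) Filter.atBot ∧
    Filter.Tendsto h Filter.atTop (nhds (⨆ i, Real.log (r i))) ∧
    ((1 / m) * ∑ i, Real.log (r i) < ⨆ i, Real.log (r i) →
      ∃! α : ℝ, 0 < α ∧ h α = (1 / m) * ∑ i, Real.log (r i)) := by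
  intro h
  have hnem : Nonempty (Fin m) := ⟨⟨0, hm⟩⟩
  set L : Fin m → ℝ := fun i => Real.log (r i) with hL
  have hrw : ∀ (α : ℝ) (i : Fin m), r i ^ α = Real.exp (L i * α) := fun α i =>
    Real.rpow_def_of_pos (hr i) α
  have hh : ∀ α : ℝ, h α =
      (∑ i, k i * Real.exp (L i * α) * L i) / (∑ i, k i * Real.exp (L i * α)) - 1 / α := by
    intro α; simp only [h, hrw, hL]
  -- denominator positive
  have hden : ∀ α : ℝ, 0 < ∑ i, k i * Real.exp (L i * α) := by
    intro α
    exact Finset.sum_pos (fun i _ => mul_pos (hk i) (Real.exp_pos _)) Finset.univ_nonempty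
  -- continuity of the ratio part
  have hcontN : Continuous fun α : ℝ => ∑ i, k i * Real.exp (L i * α) * L i := by
    apply continuous_finset_sum
    intro i _
    fun_prop
  have hcontD : Continuous fun α : ℝ => ∑ i, k i * Real.exp (L i * α) := by
    apply continuous_finset_sum
    intro i _
    fun_prop
  have hcontG : Continuous fun α : ℝ =>
      (∑ i, k i * Real.exp (L i * α) * L i) / (∑ i, k i * Real.exp (L i * α)) :=
    hcontN.div hcontD fun α => (hden α).ne'
  -- Part 1
  have part1 : Tendsto h (nhdsWithin 0 (Set.Ioi 0)) atBot := by
    have h1 : Tendsto (fun α : ℝ =>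
        (∑ i, k i * Real.exp (L i * α) * L i) / (∑ i, k i * Real.exp (L i * α)))
        (nhdsWithin 0 (Set.Ioi 0))
        (nhds ((∑ i, k i * Real.exp (L i * 0) * L i) / (∑ i, k i * Real.exp (L i * 0)))) :=
      (hcontG.tendsto 0).mono_left nhdsWithin_le_nhds
    have h2 : Tendsto (fun α : ℝ => -(1 / α)) (nhdsWithin 0 (Set.Ioi 0)) atBot := by
      simp only [one_div]
      exact tendsto_neg_atBot_iff.mpr tendsto_inv_nhdsGT_zero
    have := tendsto_atBot_add_left_of_ge' _
        ((∑ i, k i * Real.exp (L i * 0) * L i) / (∑ i, k i * Real.exp (L i * 0)) + 1)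
        (h1.eventually (eventually_le_nhds (by linarith))) h2
    have heq : (fun α : ℝ =>
        (∑ i, k i * Real.exp (L i * α) * L i) / (∑ i, k i * Real.exp (L i * α)) + -(1 / α)) = h := by
      funext α; rw [hh α]; ring
    rwa [heq] at this
  -- Part 2
  have part2 : Tendsto h atTop (nhds (⨆ i, L i)) := by
    set M := ⨆ i, L i with hM
    obtain ⟨i0, hi0⟩ := Finite.exists_max L
    have hMle : ∀ i, L i ≤ M := fun i => le_ciSup (Set.Finite.bddAbove (Set.finite_range L)) i
    have hMi0 : L i0 = M := le_antisymm (hMle i0) (ciSup_le hi0)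
    -- shifted representation
    have hshift : ∀ α : ℝ, h α =
        (∑ i, k i * Real.exp ((L i - M) * α) * L i) / (∑ i, k i * Real.exp ((L i - M) * α))
          - 1 / α := by
      intro α
      rw [hh α]
      congr 1
      have e1 : ∑ i, k i * Real.exp ((L i - M) * α) * L i
          = (∑ i, k i * Real.exp (L i * α) * L i) * Real.exp (-(M * α)) := by
        rw [Finset.sum_mul]; congr 1; ext i
        rw [show (L i - M) * α = L i * α + -(M * α) by ring, Real.exp_add]
        ring
      have e2 : ∑ i, k i * Real.exp ((L i - M) * α)
          = (∑ i, k i * Real.exp (L i * α)) * Real.exp (-(M * α)) := by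
        rw [Finset.sum_mul]; congr 1; ext i
        rw [show (L i - M) * α = L i * α + -(M * α) by ring, Real.exp_add]
        ring
      rw [e1, e2, mul_div_mul_right _ _ (Real.exp_ne_zero _)]
    -- per-term limits
    have hterm : ∀ i : Fin m, Tendsto (fun α : ℝ => Real.exp ((L i - M) * α)) atTop
        (nhds (if L i = M then (1:ℝ) else 0)) := by
      intro i
      rcases eq_or_lt_of_le (hMle i) with heq | hlt
      · simp only [heq, if_pos rfl, sub_self, zero_mul, Real.exp_zero]
        exact tendsto_const_nhds
      · rw [if_neg hlt.ne]
        have : Tendsto (fun α : ℝ => (L i - M) * α) atTop atBot :=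
          (tendsto_const_mul_atBot_of_neg (by linarith)).2 tendsto_id
        exact Real.tendsto_exp_atBot.comp this
    set D := ∑ i, k i * (if L i = M then (1:ℝ) else 0) with hD
    have hDpos : 0 < D := by
      apply Finset.sum_pos'
      · intro i _
        split <;> simp [le_of_lt (hk i)]
      · exact ⟨i0, Finset.mem_univ i0, by simp [hMi0, hk i0]⟩
    have hNlim : Tendsto (fun α : ℝ => ∑ i, k i * Real.exp ((L i - M) * α) * L i) atTop
        (nhds (∑ i, k i * (if L i = M then (1:ℝ) else 0) * L i)) := by
      apply tendsto_finset_sum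
      intro i _
      exact (tendsto_const_nhds.mul (hterm i)).mul tendsto_const_nhds
    have hDlim : Tendsto (fun α : ℝ => ∑ i, k i * Real.exp ((L i - M) * α)) atTop (nhds D) := by
      apply tendsto_finset_sum
      intro i _
      exact tendsto_const_nhds.mul (hterm i)
    have hNval : ∑ i, k i * (if L i = M then (1:ℝ) else 0) * L i = M * D := by
      rw [hD, Finset.mul_sum]
      congr 1; ext i
      by_cases hi : L i = M <;> simp [hi] <;> ring
    have hratio : Tendsto (fun α : ℝ =>
        (∑ i, k i * Real.exp ((L i - M) * α) * L i) / (∑ i, k i * Real.exp ((L i - M) * α)))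
        atTop (nhds M) := by
      have := hNlim.div hDlim hDpos.ne'
      rwa [hNval, mul_div_assoc, div_self hDpos.ne', mul_one] at this
    have hinv : Tendsto (fun α : ℝ => 1 / α) atTop (nhds 0) := by
      simp only [one_div]; exact tendsto_inv_atTop_zero
    have := hratio.sub hinv
    rw [sub_zero] at this
    refine Tendsto.congr (fun α => (hshift α).symm) this
  refine ⟨part1, part2, ?_⟩
  -- Part 3
  intro hlt
  set c := (1 / (m:ℝ)) * ∑ i, L i with hc
  set M := ⨆ i, L i with hM
  -- strict monotonicity on Ioi 0
  have hmono : StrictMonoOn h (Set.Ioi 0) := by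
    intro x hx y hy hxy
    rw [hh x, hh y]
    have hg := ws_ratio_mono k L hk (le_of_lt hxy)
    have hgle : (∑ i, k i * Real.exp (L i * x) * L i) / (∑ i, k i * Real.exp (L i * x))
        ≤ (∑ i, k i * Real.exp (L i * y) * L i) / (∑ i, k i * Real.exp (L i * y)) :=
      (div_le_div_iff₀ (hden x) (hden y)).2 hg
    have hinv : 1 / y < 1 / x := one_div_lt_one_div_of_lt hx hxy
    linarith
  -- existence
  obtain ⟨a, ha1, ha2⟩ : ∃ a, h a < c ∧ a ∈ Set.Ioi (0:ℝ) :=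
    ((part1.eventually_lt_atBot c).and self_mem_nhdsWithin).exists
  obtain ⟨b, hb1, hb2⟩ : ∃ b, c < h b ∧ a + 1 ≤ b :=
    ((part2.eventually_const_lt hlt).and (eventually_ge_atTop (a + 1))).exists
  have hab : a < b := by linarith
  have hcont : ContinuousOn h (Set.Icc a b) := by
    have : ContinuousOn (fun α : ℝ => 1 / α) (Set.Icc a b) := by
      apply ContinuousOn.div continuousOn_const continuousOn_id
      intro x hx
      have : (0:ℝ) < x := lt_of_lt_of_le ha2 hx.1
      exact this.ne'
    have h2 : ContinuousOn (fun α : ℝ =>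
        (∑ i, k i * Real.exp (L i * α) * L i) / (∑ i, k i * Real.exp (L i * α)) - 1 / α)
        (Set.Icc a b) := hcontG.continuousOn.sub this
    exact h2.congr fun α _ => hh α
  have hmem : c ∈ Set.Icc (h a) (h b) := ⟨le_of_lt ha1, le_of_lt hb1⟩
  obtain ⟨α, hαmem, hαc⟩ := intermediate_value_Icc (le_of_lt hab) hcont hmem
  have hαpos : (0:ℝ) < α := lt_of_lt_of_le ha2 hαmem.1
  refine ⟨α, ⟨hαpos, hαc⟩, ?_⟩
  rintro y ⟨hy, hyc⟩
  exact hmono.injOn hy hαpos (by rw [hyc, hαc])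
end

section
/- Let r_1,…,r_m > 0, k_1,…,k_m > 0, and set r_i' = (r_i/σ)^α for fixed α, σ > 0. If α̂' satisfies h'(α̂') = (1/m)Σ log r_i' where h'(a) = (Σ k_i (r_i')^a log r_i')/(Σ k_i (r_i')^a) − 1/a, then α̂ := α·α̂' satisfies h(α̂) = (1/m)Σ log r_i, where h(a) = (Σ k_i r_i^a log r_i)/(Σ k_i r_i^a) − 1/a. That is, the MLE of the Weibull shape parameter is equivariant: α̂ = α α̂'. -/
/-!
Write `h_k(x; a)` for the left-hand side of the Weibull shape likelihood equation
`h_k(x; a) = (1/m) ∑ log xᵢ`. Raising the data to the power `α` gives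
`h_k(x^α; a) = α h_k(x; α a)`, and dividing the data by `σ` shifts both `h_k(x; a)` and the
mean of the logarithms by `-log σ`. Hence `a'` solves the equation for `(r/σ)^α`
exactly when `α a'` solves it for `r`.
-/

open Real Finset

noncomputable def shapeScore {ι : Type*} [Fintype ι] (k x : ι → ℝ) (a : ℝ) : ℝ :=
  (∑ i, k i * x i ^ a * log (x i)) / (∑ i, k i * x i ^ a) - 1 / a

section

variable {ι : Type*} [Fintype ι] {k x : ι → ℝ}

theorem shapeScore_rpow (hx : ∀ i, 0 < x i) {α : ℝ} (hα : α ≠ 0) (a : ℝ) :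
    shapeScore k (fun i => x i ^ α) a = α * shapeScore k x (α * a) := by
  have hpow (i : ι) : (x i ^ α) ^ a = x i ^ (α * a) := (rpow_mul (hx i).le α a).symm
  have hnum : ∑ i, k i * (x i ^ α) ^ a * log (x i ^ α)
      = α * ∑ i, k i * x i ^ (α * a) * log (x i) := by
    rw [mul_sum]
    exact sum_congr rfl fun i _ => by rw [hpow, log_rpow (hx i)]; ring
  rw [shapeScore, shapeScore, hnum,
    Fintype.sum_congr _ _ fun i => congrArg (k i * ·) (hpow i), mul_sub, mul_div_assoc,
    mul_one_div, div_mul_cancel_left₀ hα, one_div]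

theorem shapeScore_div_const (hx : ∀ i, 0 < x i) {c : ℝ} (hc : 0 < c) (b : ℝ)
    (hS : ∑ i, k i * x i ^ b ≠ 0) :
    shapeScore k (fun i => x i / c) b = shapeScore k x b - log c := by
  have hterm (i : ι) : k i * (x i / c) ^ b * log (x i / c)
      = (k i * x i ^ b * log (x i) - log c * (k i * x i ^ b)) / c ^ b := by
    rw [div_rpow (hx i).le hc.le, log_div (hx i).ne' hc.ne']
    ring
  have hden (i : ι) : k i * (x i / c) ^ b = k i * x i ^ b / c ^ b := by
    rw [div_rpow (hx i).le hc.le, mul_div_assoc]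
  rw [shapeScore, shapeScore, Fintype.sum_congr _ _ hterm, Fintype.sum_congr _ _ hden,
    ← sum_div, ← sum_div, sum_sub_distrib, ← mul_sum]
  field_simp
  ring

theorem sum_log_rpow (hx : ∀ i, 0 < x i) (α : ℝ) :
    ∑ i, log (x i ^ α) = α * ∑ i, log (x i) := by
  rw [mul_sum]
  exact sum_congr rfl fun i _ => log_rpow (hx i) α

theorem sum_log_div_const (hx : ∀ i, 0 < x i) {c : ℝ} (hc : 0 < c) :
    ∑ i, log (x i / c) = ∑ i, log (x i) - Fintype.card ι * log c := by
  simp only [log_div (hx _).ne' hc.ne', sum_sub_distrib, sum_const, card_univ, nsmul_eq_mul]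

end

theorem stmt_15 (m : ℕ) (r : Fin m → ℝ) (k : Fin m → ℝ) (α σ a' : ℝ)
    (hr : ∀ i, 0 < r i) (hk : ∀ i, 0 < k i) (hα : 0 < α) (hσ : 0 < σ) (ha' : 0 < a')
    (hmle : (∑ i, k i * ((r i / σ) ^ α) ^ a' * Real.log ((r i / σ) ^ α)) /
        (∑ i, k i * ((r i / σ) ^ α) ^ a') - 1 / a'
      = (1 / m) * ∑ i, Real.log ((r i / σ) ^ α)) :
    (∑ i, k i * r i ^ (α * a') * Real.log (r i)) / (∑ i, k i * r i ^ (α * a'))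
        - 1 / (α * a')
      = (1 / m) * ∑ i, Real.log (r i) := by
  have hm : (m : ℝ) ≠ 0 := by
    rintro hm0
    obtain rfl : m = 0 := by exact_mod_cast hm0
    simp only [univ_eq_empty, sum_empty, div_zero, zero_sub, mul_zero, neg_eq_zero,
      one_div, inv_eq_zero] at hmle
    exact ha'.ne' hmle
  have : Nonempty (Fin m) := Fin.pos_iff_nonempty.mp (Nat.pos_of_ne_zero (by exact_mod_cast hm))
  have hS : ∑ i, k i * r i ^ (α * a') ≠ 0 :=
    (sum_pos (fun i _ => mul_pos (hk i) (rpow_pos_of_pos (hr i) _)) univ_nonempty).ne'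
  have hrσ (i : Fin m) : 0 < r i / σ := div_pos (hr i) hσ
  change shapeScore k (fun i => (r i / σ) ^ α) a' = _ at hmle
  change shapeScore k r (α * a') = _
  rw [shapeScore_rpow hrσ hα.ne', sum_log_rpow hrσ, shapeScore_div_const hr hσ _ hS,
    sum_log_div_const hr hσ, Fintype.card_fin] at hmle
  have hshift : shapeScore k r (α * a') - log σ = 1 / m * ∑ i, log (r i) - log σ := by
    apply mul_left_cancel₀ hα.ne'
    rw [hmle]
    field_simp
  linarith
end
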